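/- (Strict optimality.) Let π* be a plan solving the compiled problem P_mod of minimum length among all plans solving P_mod. If π is a plan solving both the robot's problem P_R and the human's problem P_H with len(π) > len(π*), then IE(π*) < IE(π). -/
import Mathlib


/-- A STRIPS planning problem over fluents `F` and actions `A`. -/
structure Problem (F : Type) (A : Type) where
  pre : A → Set F
  add : A → Set F
  del : A → Set F
  I : Set F
  G : Set F

/-- Applying action `a` in state `s`. -/
def applyAct {F A : Type} (P : Problem F A) (s : Set F) (a : A) : Set F :=
  (s ∪ P.add a) \ P.del a

/-- A plan is executable from a state iff each action's precondition holds
in the state obtained by applying the preceding actions. -/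
def Executable {F A : Type} (P : Problem F A) : Set F → List A → Prop
  | _, [] => True
  | s, a :: rest => P.pre a ⊆ s ∧ Executable P (applyAct P s a) rest

/-- The resulting state of a plan from a state. -/
def result {F A : Type} (P : Problem F A) : Set F → List A → Set F
  | s, [] => s
  | s, a :: rest => result P (applyAct P s a) rest

/-- A plan solves a problem iff it is executable from the initial state and
its resulting state contains the goal. -/
def Solves {F A : Type} (P : Problem F A) (π : List A) : Prop :=
  Executable P P.I π ∧ P.G ⊆ result P P.I π

/-- Tagged union of two states: `s_R ⊎ s_H ⊆ F ⊕ F`. -/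
def tagUnion {F : Type} (sR sH : Set F) : Set (F ⊕ F) :=
  Sum.inl '' sR ∪ Sum.inr '' sH

/-- The compiled problem `P_mod` over `F ⊕ F`. -/
def compiled {F A : Type} (PR PH : Problem F A) : Problem (F ⊕ F) A where
  pre a := tagUnion (PR.pre a) (PH.pre a)
  add a := tagUnion (PR.add a) (PH.add a)
  del a := tagUnion (PR.del a) (PH.del a)
  I := tagUnion PR.I PH.I
  G := tagUnion PR.G PH.G

-- Inexplicability score (unit action costs): `exp (|len π - c_H*|)` if `π`
-- also solves `P_H`, and `∞` otherwise; valued in `[0, ∞]`.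
open Classical in
noncomputable def IE {F A : Type} (PH : Problem F A) (cH : ℕ) (π : List A) : ENNReal :=
  if Solves PH π then ENNReal.ofReal (Real.exp |(π.length : ℝ) - (cH : ℝ)|) else ⊤

lemma tagUnion_subset_iff {F : Type} {aR aH sR sH : Set F} :
    tagUnion aR aH ⊆ tagUnion sR sH ↔ aR ⊆ sR ∧ aH ⊆ sH := by
  constructor
  · intro h
    constructor
    · intro x hx
      have := h (Set.mem_union_left _ ⟨x, hx, rfl⟩)
      rcases this with ⟨y, hy, hxy⟩ | ⟨y, hy, hxy⟩
      · cases hxy; exact hy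
      · cases hxy
    · intro x hx
      have := h (Set.mem_union_right _ ⟨x, hx, rfl⟩)
      rcases this with ⟨y, hy, hxy⟩ | ⟨y, hy, hxy⟩
      · cases hxy
      · cases hxy; exact hy
  · rintro ⟨h1, h2⟩ x (⟨y, hy, rfl⟩ | ⟨y, hy, rfl⟩)
    · exact Set.mem_union_left _ ⟨y, h1 hy, rfl⟩
    · exact Set.mem_union_right _ ⟨y, h2 hy, rfl⟩

lemma applyAct_compiled {F A : Type} (PR PH : Problem F A) (sR sH : Set F) (a : A) :
    applyAct (compiled PR PH) (tagUnion sR sH) a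
      = tagUnion (applyAct PR sR a) (applyAct PH sH a) := by
  ext x
  cases x with
  | inl f =>
      simp [applyAct, compiled, tagUnion, Set.mem_union, Set.mem_diff]
  | inr f =>
      simp [applyAct, compiled, tagUnion, Set.mem_union, Set.mem_diff]

lemma result_compiled {F A : Type} (PR PH : Problem F A) :
    ∀ (π : List A) (sR sH : Set F),
      result (compiled PR PH) (tagUnion sR sH) π
        = tagUnion (result PR sR π) (result PH sH π)
  | [], _, _ => rfl
  | a :: rest, sR, sH => by
      simp only [result, applyAct_compiled]
      exact result_compiled PR PH rest _ _

lemma executable_compiled {F A : Type} (PR PH : Problem F A) :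
    ∀ (π : List A) (sR sH : Set F),
      Executable (compiled PR PH) (tagUnion sR sH) π →
        Executable PH sH π
  | [], _, _, _ => trivial
  | a :: rest, sR, sH, h => by
      obtain ⟨hpre, hrest⟩ := h
      rw [applyAct_compiled] at hrest
      exact ⟨(tagUnion_subset_iff.mp hpre).2,
        executable_compiled PR PH rest _ _ hrest⟩

lemma solves_compiled_H {F A : Type} {PR PH : Problem F A} {π : List A}
    (h : Solves (compiled PR PH) π) : Solves PH π := by
  obtain ⟨hexec, hgoal⟩ := h
  refine ⟨executable_compiled PR PH π PR.I PH.I hexec, ?_⟩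
  rw [show (compiled PR PH).I = tagUnion PR.I PH.I from rfl,
    result_compiled] at hgoal
  exact (tagUnion_subset_iff.mp hgoal).2

theorem stmt_8 {F A : Type} (PR PH : Problem F A) (cH : ℕ)
    (hcH_att : ∃ π : List A, Solves PH π ∧ π.length = cH)
    (hcH_min : ∀ π : List A, Solves PH π → cH ≤ π.length)
    (πs : List A) (hπs : Solves (compiled PR PH) πs)
    (hπs_min : ∀ π : List A, Solves (compiled PR PH) π → πs.length ≤ π.length)
    (π : List A) (hR : Solves PR π) (hH : Solves PH π)
    (hlen : πs.length < π.length) :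
    IE PH cH πs < IE PH cH π := by
  have hsH : Solves PH πs := solves_compiled_H hπs
  have h1 : cH ≤ πs.length := hcH_min _ hsH
  have h2 : cH ≤ π.length := hcH_min _ hH
  rw [IE, if_pos hsH, IE, if_pos hH]
  rw [abs_of_nonneg (sub_nonneg.mpr (Nat.cast_le.mpr h1 : (cH:ℝ) ≤ _)),
      abs_of_nonneg (sub_nonneg.mpr (Nat.cast_le.mpr h2 : (cH:ℝ) ≤ _))]
  apply ENNReal.ofReal_lt_ofReal_iff_of_nonneg (Real.exp_nonneg _) |>.mpr
  apply Real.exp_lt_exp.mpr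
  have : (πs.length : ℝ) < π.length := by exact_mod_cast hlen
  linarith
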